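/- arXiv:2504.01713 — 4 statements merged into one kernel-verified Lean document; each statement's English description precedes it below -/
import Mathlib

section
/- Let d ≥ 2 and suppose |S| is odd. If a ∈ ℝ^d is a winning point for Alice, then a ∈ S. -/
/-!
Suppose `a ∉ S`. Finitely many proper hyperplanes do not cover the space, so some direction `u`
has `⟪u, x - a⟫ ≠ 0` for every voter `x`. For small `ε > 0` the point `a + ε • u` is strictly
closer than `a` to exactly the voters with `⟪u, x - a⟫ > 0`, so a winning point `a` has at most
half of `S` in each open half-space bounded by the hyperplane through `a` normal to `u`. No voter
lies on that hyperplane, hence `|S|` is even.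
-/

open scoped RealInnerProductSpace

/-- `claims S a b` is the number of voters in `S` strictly closer to `a` than to `b`.
Thus `V_A(a,b) = claims S a b` and `V_B(a,b) = claims S b a`. -/
noncomputable def claims {d : ℕ} (S : Finset (EuclideanSpace ℝ (Fin d)))
    (a b : EuclideanSpace ℝ (Fin d)) : ℕ :=
  (S.filter fun x => dist a x < dist b x).card

/-- `a` is a winning point for Alice: `V_A(a,b) ≥ V_B(a,b)` for every `b`. -/
def IsWinningPoint {d : ℕ} (S : Finset (EuclideanSpace ℝ (Fin d)))
    (a : EuclideanSpace ℝ (Fin d)) : Prop :=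
  ∀ b : EuclideanSpace ℝ (Fin d), claims S b a ≤ claims S a b

open Filter Topology

theorem exists_forall_inner_ne_zero {𝕜 E : Type*} [RCLike 𝕜] [NormedAddCommGroup E]
    [InnerProductSpace 𝕜 E] (T : Finset E) (hT : ∀ v ∈ T, v ≠ 0) :
    ∃ u : E, ∀ v ∈ T, inner 𝕜 u v ≠ 0 := by
  by_contra! h
  have hcover : ⋃ v : T, ((𝕜 ∙ (v : E))ᗮ : Set E) = Set.univ :=
    Set.eq_univ_of_forall fun u => by
      obtain ⟨v, hv, hvu⟩ := h u
      refine Set.mem_iUnion.mpr ⟨⟨v, hv⟩, ?_⟩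
      exact Submodule.mem_orthogonal_singleton_iff_inner_right.mpr (inner_eq_zero_symm.mp hvu)
  obtain ⟨⟨v, hv⟩, htop⟩ := Subspace.exists_eq_top_of_iUnion_eq_univ hcover
  have hvv : v ∈ (𝕜 ∙ v)ᗮ := htop ▸ Submodule.mem_top
  exact hT v hv (inner_self_eq_zero.mp (Submodule.mem_orthogonal_singleton_iff_inner_right.mp hvv))

theorem norm_add_smul_sub_sq {E : Type*} [NormedAddCommGroup E] [InnerProductSpace ℝ E]
    (a u x : E) (ε : ℝ) :
    ‖a + ε • u - x‖ ^ 2 = ‖a - x‖ ^ 2 + ε * (ε * ‖u‖ ^ 2 - 2 * ⟪u, x - a⟫) := by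
  rw [show a + ε • u - x = (a - x) + ε • u by abel, norm_add_sq_real, real_inner_smul_right,
    norm_smul, mul_pow, Real.norm_eq_abs, sq_abs, real_inner_comm, ← neg_sub x a, inner_neg_right]
  ring

theorem dist_add_smul_lt_dist_iff {E : Type*} [NormedAddCommGroup E] [InnerProductSpace ℝ E]
    {ε : ℝ} (hε : 0 < ε) (a u x : E) :
    dist (a + ε • u) x < dist a x ↔ ε * ‖u‖ ^ 2 < 2 * ⟪u, x - a⟫ := by
  rw [dist_eq_norm, dist_eq_norm, ← sq_lt_sq₀ (norm_nonneg _) (norm_nonneg _),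
    norm_add_smul_sub_sq, add_lt_iff_neg_left, ← mul_zero ε,
    mul_lt_mul_iff_of_pos_left hε, sub_neg]

theorem eventually_dist_add_smul_lt_dist_iff {E : Type*} [NormedAddCommGroup E]
    [InnerProductSpace ℝ E] (a u x : E) :
    ∀ᶠ ε in 𝓝[>] (0 : ℝ), dist (a + ε • u) x < dist a x ↔ 0 < ⟪u, x - a⟫ := by
  have hsmall : Tendsto (fun ε : ℝ => ε * ‖u‖ ^ 2) (𝓝[>] 0) (𝓝 0) := by
    simpa using ((tendsto_id (x := 𝓝 (0 : ℝ))).mul_const (‖u‖ ^ 2)).mono_left nhdsWithin_le_nhds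
  rcases lt_or_ge 0 ⟪u, x - a⟫ with hpos | hnonpos
  · have h2pos : (0 : ℝ) < 2 * ⟪u, x - a⟫ := by linarith
    filter_upwards [self_mem_nhdsWithin, hsmall.eventually_lt_const h2pos] with ε hε hεu
    simp only [dist_add_smul_lt_dist_iff hε, hεu, hpos]
  · filter_upwards [self_mem_nhdsWithin] with ε (hε : 0 < ε)
    rw [dist_add_smul_lt_dist_iff hε]
    exact iff_of_false (by nlinarith [mul_nonneg hε.le (sq_nonneg ‖u‖)]) hnonpos.not_gt

theorem claims_add_claims_le_card {d : ℕ} (S : Finset (EuclideanSpace ℝ (Fin d)))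
    (a b : EuclideanSpace ℝ (Fin d)) : claims S a b + claims S b a ≤ S.card := by
  rw [claims, claims, ← Finset.card_union_of_disjoint]
  · exact Finset.card_le_card (Finset.union_subset (S.filter_subset _) (S.filter_subset _))
  · exact Finset.disjoint_filter.mpr fun _ _ h h' => lt_asymm h h'

theorem eventually_claims_add_smul {d : ℕ} (S : Finset (EuclideanSpace ℝ (Fin d)))
    (a u : EuclideanSpace ℝ (Fin d)) :
    ∀ᶠ ε in 𝓝[>] (0 : ℝ), claims S (a + ε • u) a = (S.filter fun x => 0 < ⟪u, x - a⟫).card := by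
  have hvoters :=
    (eventually_all_finset S).mpr fun x _ => eventually_dist_add_smul_lt_dist_iff a u x
  filter_upwards [hvoters] with ε hε
  exact congrArg Finset.card (Finset.filter_congr hε)

namespace IsWinningPoint

variable {d : ℕ} {S : Finset (EuclideanSpace ℝ (Fin d))} {a : EuclideanSpace ℝ (Fin d)}

theorem two_mul_claims_le_card (ha : IsWinningPoint S a) (b : EuclideanSpace ℝ (Fin d)) :
    2 * claims S b a ≤ S.card := by
  have := claims_add_claims_le_card S a b
  have := ha b
  omega

theorem two_mul_card_filter_inner_pos_le (ha : IsWinningPoint S a)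
    (u : EuclideanSpace ℝ (Fin d)) :
    2 * (S.filter fun x => 0 < ⟪u, x - a⟫).card ≤ S.card := by
  obtain ⟨ε, hε⟩ := (eventually_claims_add_smul S a u).exists
  exact hε ▸ ha.two_mul_claims_le_card (a + ε • u)

end IsWinningPoint

theorem card_filter_pos_add_card_filter_neg {α : Type*} (S : Finset α) (f : α → ℝ)
    (hf : ∀ x ∈ S, f x ≠ 0) :
    (S.filter fun x => 0 < f x).card + (S.filter fun x => 0 < -f x).card = S.card := by
  rw [← Finset.card_filter_add_card_filter_not (s := S) (fun x => 0 < f x)]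
  congr 2
  refine Finset.filter_congr fun x hx => ?_
  rw [neg_pos, not_lt]
  exact ⟨le_of_lt, fun h => lt_of_le_of_ne h (hf x hx)⟩

theorem stmt3_general (d : ℕ) (S : Finset (EuclideanSpace ℝ (Fin d)))
    (hodd : Odd S.card) (a : EuclideanSpace ℝ (Fin d))
    (ha : IsWinningPoint S a) :
    a ∈ S := by
  by_contra haS
  obtain ⟨u, hu⟩ := exists_forall_inner_ne_zero (𝕜 := ℝ) (S.image (· - a)) (by
    simp only [Finset.mem_image, forall_exists_index, and_imp, forall_apply_eq_imp_iff₂]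
    exact fun x hx h => haS (sub_eq_zero.mp h ▸ hx))
  have hsplit := card_filter_pos_add_card_filter_neg S (fun x => ⟪u, x - a⟫)
    fun x hx => hu _ (Finset.mem_image_of_mem _ hx)
  have hpos := ha.two_mul_card_filter_inner_pos_le u
  have hneg := ha.two_mul_card_filter_inner_pos_le (-u)
  simp only [inner_neg_left] at hneg
  exact Nat.not_even_iff_odd.mpr hodd ⟨(S.filter fun x => 0 < ⟪u, x - a⟫).card, by omega⟩

/-- if `d ≥ 2` and `|S|` is odd, then any winning point of Alice belongs to `S`. -/
theorem stmt3 (d : ℕ) (hd : 2 ≤ d) (S : Finset (EuclideanSpace ℝ (Fin d)))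
    (hodd : Odd S.card) (a : EuclideanSpace ℝ (Fin d))
    (ha : IsWinningPoint S a) :
    a ∈ S :=
  stmt3_general d S hodd a ha
end

section
/- Let d ≥ 2 and suppose |S| is odd. Then Alice wins if and only if there exists a point x ∈ S such that every perfect hyperplane contains x; moreover, any such x is a winning point for Alice. -/
open scoped RealInnerProductSpace

/-- A hyperplane `{y | ⟪y,c⟫ = lam}` is perfect (odd case): good, and containing exactly
one point of `S`. -/
noncomputable def IsPerfectOdd {d : ℕ} (S : Finset (EuclideanSpace ℝ (Fin d)))
    (c : EuclideanSpace ℝ (Fin d)) (lam : ℝ) : Prop :=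
  (S.filter fun y => lam < ⟪y, c⟫).card = (S.filter fun y => ⟪y, c⟫ < lam).card ∧
  (S.filter fun y => ⟪y, c⟫ = lam).card = 1

/-!
Comparing squared distances, `b` beats `a` exactly on the voters strictly beyond the
perpendicular bisector of `ab`, and every hyperplane with `a` strictly on one side is such a
bisector. So `a` wins iff no open half-space avoiding `a` holds more voters than the opposite open
half-space. A perfect hyperplane missing `a` violates this once it is shifted slightly towards
`a`. Conversely, a violating hyperplane can be tilted, keeping `a` strictly on one side and the
voters on or beyond it strictly beyond, to a direction in which all voters have distinct heights
(such directions are dense); the hyperplane of that direction through the median voter is perfect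
and misses `a`. Finally a winning point lies in `S`: in a direction separating `S ∪ {a}`, the
median hyperplane is perfect and would have to pass through `a`.
-/

open Finset

section Counting

variable {ι α : Type*} [LinearOrder α]

lemma card_filter_le_add_card_filter_lt (s : Finset ι) (f : ι → α) (t : α) :
    #{y ∈ s | t ≤ f y} + #{y ∈ s | f y < t} = #s := by
  simpa only [not_le] using card_filter_add_card_filter_not (s := s) (t ≤ f ·)

lemma card_filter_lt_add_card_filter_eq_add_card_filter_gt (s : Finset ι) (f : ι → α) (t : α) :
    #{y ∈ s | f y < t} + #{y ∈ s | f y = t} + #{y ∈ s | t < f y} = #s := by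
  classical
  have hle : #{y ∈ s | t ≤ f y} = #{y ∈ s | f y = t} + #{y ∈ s | t < f y} := by
    rw [← card_union_of_disjoint (disjoint_filter.2 fun _ _ h h' => h'.ne' h), ← filter_or]
    simp only [le_iff_eq_or_lt, eq_comm]
  linarith [card_filter_le_add_card_filter_lt s f t]

lemma exists_card_filter_lt_eq {s : Finset ι} {f : ι → α} (hf : Set.InjOn f s) {k : ℕ}
    (hk : k < #s) : ∃ y ∈ s, #{z ∈ s | f z < f y} = k := by
  classical
  induction s using Finset.induction_on_max_value f generalizing k with
  | empty => simp at hk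
  | insert a s ha hmax ih =>
    rw [coe_insert] at hf
    rw [card_insert_of_notMem ha] at hk
    rcases (Nat.lt_succ_iff.1 hk).lt_or_eq with hk | rfl
    · obtain ⟨y, hy, rfl⟩ := ih (hf.mono (Set.subset_insert a s)) hk
      refine ⟨y, mem_insert_of_mem hy, ?_⟩
      rw [filter_insert, if_neg (not_lt.2 (hmax y hy))]
    · refine ⟨a, mem_insert_self a s, ?_⟩
      have hlt : ∀ z ∈ s, f z < f a := fun z hz => (hmax z hz).lt_of_ne fun h =>
        ha (hf (Set.mem_insert_of_mem a hz) (Set.mem_insert a s) h ▸ hz)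
      rw [filter_insert, if_neg (lt_irrefl _), filter_true_of_mem hlt]

end Counting

section InnerProductSpace

variable {E : Type*} [NormedAddCommGroup E] [InnerProductSpace ℝ E]

lemma dense_setOf_inner_ne_zero {v : E} (hv : v ≠ 0) : Dense {c : E | ⟪v, c⟫ ≠ 0} := by
  have hcompl : {c : E | ⟪v, c⟫ ≠ 0} = ((ℝ ∙ v)ᗮ : Set E)ᶜ := by
    ext c; simp [Submodule.mem_orthogonal_singleton_iff_inner_right]
  rw [hcompl, ← interior_eq_empty_iff_dense_compl, ← Set.not_nonempty_iff_eq_empty]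
  intro hint
  have := (Submodule.orthogonal_eq_top_iff _).1 ((ℝ ∙ v)ᗮ.eq_top_of_nonempty_interior' hint)
  exact hv (Submodule.span_singleton_eq_bot.1 this)

lemma dense_setOf_injOn_inner {s : Set E} (hs : s.Finite) :
    Dense {c : E | s.InjOn (⟪·, c⟫)} := by
  have hpairs : {p ∈ s ×ˢ s | p.1 ≠ p.2}.Finite := (hs.prod hs).subset (Set.sep_subset _ _)
  refine ((hpairs.image fun p => {c : E | ⟪p.1 - p.2, c⟫ ≠ 0}).dense_sInter ?_ ?_).mono ?_
  · rintro _ ⟨p, -, rfl⟩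
    exact isOpen_ne_fun (by fun_prop) continuous_const
  · rintro _ ⟨p, ⟨-, hp⟩, rfl⟩
    exact dense_setOf_inner_ne_zero (sub_ne_zero.2 hp)
  · intro c hc y hy z hz hyz
    by_contra hne
    exact hc _ ⟨(y, z), ⟨⟨hy, hz⟩, hne⟩, rfl⟩ (by simp [inner_sub_left, hyz])

lemma dist_add_sq (x v y : E) :
    dist (x + v) y ^ 2 = dist x y ^ 2 + 2 * (⟪x, v⟫ + ‖v‖ ^ 2 / 2 - ⟪y, v⟫) := by
  rw [dist_eq_norm, dist_eq_norm, add_sub_right_comm, norm_add_sq_real, inner_sub_left]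
  ring

lemma dist_add_lt_dist_iff (x v y : E) :
    dist (x + v) y < dist x y ↔ ⟪x, v⟫ + ‖v‖ ^ 2 / 2 < ⟪y, v⟫ := by
  rw [← sq_lt_sq₀ dist_nonneg dist_nonneg, dist_add_sq]
  constructor <;> intro <;> linarith

lemma dist_lt_dist_add_iff (x v y : E) :
    dist x y < dist (x + v) y ↔ ⟪y, v⟫ < ⟪x, v⟫ + ‖v‖ ^ 2 / 2 := by
  rw [← sq_lt_sq₀ dist_nonneg dist_nonneg, dist_add_sq]
  constructor <;> intro <;> linarith

end InnerProductSpace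

variable {d : ℕ} {S : Finset (EuclideanSpace ℝ (Fin d))} {x c : EuclideanSpace ℝ (Fin d)}
  {lam : ℝ}

lemma claims_add_self (S : Finset (EuclideanSpace ℝ (Fin d))) (x v : EuclideanSpace ℝ (Fin d)) :
    claims S (x + v) x = #{y ∈ S | ⟪x, v⟫ + ‖v‖ ^ 2 / 2 < ⟪y, v⟫} := by
  simp only [claims, dist_add_lt_dist_iff]

lemma claims_self_add (S : Finset (EuclideanSpace ℝ (Fin d))) (x v : EuclideanSpace ℝ (Fin d)) :
    claims S x (x + v) = #{y ∈ S | ⟪y, v⟫ < ⟪x, v⟫ + ‖v‖ ^ 2 / 2} := by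
  simp only [claims, dist_lt_dist_add_iff]

theorem isWinningPoint_iff : IsWinningPoint S x ↔
    ∀ c lam, ⟪x, c⟫ < lam → #{y ∈ S | lam < ⟪y, c⟫} ≤ #{y ∈ S | ⟪y, c⟫ < lam} := by
  constructor
  · intro hx c lam hlam
    rcases eq_or_ne c 0 with rfl | hc
    · rw [inner_zero_right] at hlam
      simp [hlam, lt_asymm hlam]
    have hc' : 0 < ‖c‖ ^ 2 := by positivity
    -- `t` is chosen so that the perpendicular bisector of `x` and `x + t • c` is `⟪·, c⟫ = lam`
    set t := 2 * (lam - ⟪x, c⟫) / ‖c‖ ^ 2 with ht_def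
    have ht : 0 < t := div_pos (by linarith) hc'
    have hmid : ⟪x, t • c⟫ + ‖t • c‖ ^ 2 / 2 = t * lam := by
      rw [real_inner_smul_right, norm_smul, mul_pow, Real.norm_eq_abs, sq_abs, ht_def]
      field_simp
      ring
    have := hx (x + t • c)
    rw [claims_add_self, claims_self_add, hmid] at this
    simpa only [real_inner_smul_right, mul_lt_mul_iff_right₀ ht] using this
  · intro h b
    obtain ⟨v, rfl⟩ : ∃ v, b = x + v := ⟨b - x, by abel⟩
    rcases eq_or_ne v 0 with rfl | hv
    · rw [add_zero]
    rw [claims_add_self, claims_self_add]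
    have : 0 < ‖v‖ := norm_pos_iff.2 hv
    exact h v _ (by linarith [pow_pos this 2])

lemma isPerfectOdd_neg_iff : IsPerfectOdd S (-c) (-lam) ↔ IsPerfectOdd S c lam := by
  simp only [IsPerfectOdd, inner_neg_right, neg_lt_neg_iff, neg_inj]
  exact and_congr_left' eq_comm

lemma IsPerfectOdd.two_mul_card_add_one (h : IsPerfectOdd S c lam) :
    2 * #{y ∈ S | lam < ⟪y, c⟫} + 1 = #S := by
  obtain ⟨hgood, hon⟩ := h
  have := card_filter_lt_add_card_filter_eq_add_card_filter_gt S (⟪·, c⟫) lam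
  omega

lemma exists_isPerfectOdd_of_injOn (hodd : Odd #S) (hc : Set.InjOn (⟪·, c⟫) S) :
    ∃ y ∈ S, IsPerfectOdd S c ⟪y, c⟫ := by
  obtain ⟨m, hm⟩ := hodd
  obtain ⟨y, hy, hbelow⟩ := exists_card_filter_lt_eq hc (k := m) (by omega)
  have hon : #{z ∈ S | ⟪z, c⟫ = ⟪y, c⟫} = 1 := by
    refine card_eq_one.2 ⟨y, ?_⟩
    ext z
    simp only [mem_filter, mem_singleton]
    exact ⟨fun ⟨hz, h⟩ => hc hz hy h, by rintro rfl; exact ⟨hy, rfl⟩⟩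
  have := card_filter_lt_add_card_filter_eq_add_card_filter_gt S (⟪·, c⟫) ⟪y, c⟫
  exact ⟨y, hy, by omega, hon⟩

lemma IsWinningPoint.not_inner_lt (hx : IsWinningPoint S x) (h : IsPerfectOdd S c lam) :
    ¬ ⟪x, c⟫ < lam := by
  intro hlt
  obtain ⟨μ, hxμ, hμ⟩ := exists_between hlt
  have hwin := isWinningPoint_iff.1 hx c μ hxμ
  have habove : #{y ∈ S | lam ≤ ⟪y, c⟫} ≤ #{y ∈ S | μ < ⟪y, c⟫} :=
    card_le_card (monotone_filter_right S fun _ _ h => hμ.trans_le h)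
  have hbelow : #{y ∈ S | ⟪y, c⟫ < μ} ≤ #{y ∈ S | ⟪y, c⟫ < lam} :=
    card_le_card (monotone_filter_right S fun _ _ h => h.trans hμ)
  have := card_filter_le_add_card_filter_lt S (⟪·, c⟫) lam
  have := h.two_mul_card_add_one
  have := h.1
  omega

theorem IsWinningPoint.inner_eq_of_isPerfectOdd (hx : IsWinningPoint S x)
    (h : IsPerfectOdd S c lam) : ⟪x, c⟫ = lam := by
  have h₁ := hx.not_inner_lt h
  have h₂ := hx.not_inner_lt (isPerfectOdd_neg_iff.2 h)
  rw [inner_neg_right, neg_lt_neg_iff] at h₂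
  exact le_antisymm (not_lt.1 h₂) (not_lt.1 h₁)

theorem IsWinningPoint.mem (hodd : Odd #S) (hx : IsWinningPoint S x) : x ∈ S := by
  classical
  by_contra hxS
  obtain ⟨c, hc⟩ := (dense_setOf_injOn_inner (insert x S).finite_toSet).nonempty
  obtain ⟨y, hy, hperf⟩ := exists_isPerfectOdd_of_injOn hodd (hc.mono (by simp))
  have := hc (by simp) (by simp [hy]) (hx.inner_eq_of_isPerfectOdd hperf)
  exact hxS (this ▸ hy)

theorem isWinningPoint_of_forall_isPerfectOdd (hodd : Odd #S)
    (hx : ∀ c lam, c ≠ 0 → IsPerfectOdd S c lam → ⟪x, c⟫ = lam) : IsWinningPoint S x := by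
  refine isWinningPoint_iff.2 fun c lam hlam => ?_
  by_contra! hcount
  have hmajority : #S < 2 * #{y ∈ S | lam ≤ ⟪y, c⟫} := by
    have := card_filter_le_add_card_filter_lt S (⟪·, c⟫) lam
    have : #{y ∈ S | lam < ⟪y, c⟫} ≤ #{y ∈ S | lam ≤ ⟪y, c⟫} :=
      card_le_card (monotone_filter_right S fun _ _ h => h.le)
    omega
  have hU : IsOpen (⋂ y ∈ S.filter (lam ≤ ⟪·, c⟫), {c' | ⟪x, c'⟫ < ⟪y, c'⟫}) :=
    isOpen_biInter_finset fun y _ => isOpen_lt (by fun_prop) (by fun_prop)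
  obtain ⟨c', hsep, hinj⟩ := (dense_setOf_injOn_inner S.finite_toSet).inter_open_nonempty _ hU
    ⟨c, Set.mem_iInter₂.2 fun y hy => hlam.trans_le (mem_filter.1 hy).2⟩
  rw [Set.mem_iInter₂] at hsep
  obtain ⟨y₀, -, hperf⟩ := exists_isPerfectOdd_of_injOn hodd hinj
  obtain ⟨y, hy⟩ : (S.filter (lam ≤ ⟪·, c⟫)).Nonempty := card_pos.1 (by omega)
  have hc' : c' ≠ 0 := by
    rintro rfl
    simpa using hsep y hy
  have hxy₀ := hx c' _ hc' hperf
  have : #{y ∈ S | lam ≤ ⟪y, c⟫} ≤ #{z ∈ S | ⟪y₀, c'⟫ < ⟪z, c'⟫} :=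
    card_le_card fun z hz => mem_filter.2 ⟨(mem_filter.1 hz).1, hxy₀ ▸ hsep z hz⟩
  have := hperf.two_mul_card_add_one
  omega

theorem stmt5_general (d : ℕ) (S : Finset (EuclideanSpace ℝ (Fin d)))
    (hodd : Odd S.card) :
    ((∃ a, IsWinningPoint S a) ↔
      ∃ x ∈ S, ∀ (c : EuclideanSpace ℝ (Fin d)) (lam : ℝ), c ≠ 0 →
        IsPerfectOdd S c lam → ⟪x, c⟫ = lam) ∧
    (∀ x ∈ S,
      (∀ (c : EuclideanSpace ℝ (Fin d)) (lam : ℝ), c ≠ 0 →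
        IsPerfectOdd S c lam → ⟪x, c⟫ = lam) →
      IsWinningPoint S x) := by
  refine ⟨⟨fun ⟨a, ha⟩ => ⟨a, ha.mem hodd, fun c lam _ h => ha.inner_eq_of_isPerfectOdd h⟩,
    fun ⟨x, _, hx⟩ => ⟨x, isWinningPoint_of_forall_isPerfectOdd hodd hx⟩⟩,
    fun x _ hx => isWinningPoint_of_forall_isPerfectOdd hodd hx⟩

/-- for `d ≥ 2` and `|S|` odd, Alice wins iff there is `x ∈ S` contained in every
perfect hyperplane; moreover any such `x` is a winning point. -/
theorem stmt5 (d : ℕ) (hd : 2 ≤ d) (S : Finset (EuclideanSpace ℝ (Fin d)))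
    (hodd : Odd S.card) :
    ((∃ a, IsWinningPoint S a) ↔
      ∃ x ∈ S, ∀ (c : EuclideanSpace ℝ (Fin d)) (lam : ℝ), c ≠ 0 →
        IsPerfectOdd S c lam → ⟪x, c⟫ = lam) ∧
    (∀ x ∈ S,
      (∀ (c : EuclideanSpace ℝ (Fin d)) (lam : ℝ), c ≠ 0 →
        IsPerfectOdd S c lam → ⟪x, c⟫ = lam) →
      IsWinningPoint S x) :=
  stmt5_general d S hodd
end

section
/- Let d ≥ 2 and let S be a set of 2n distinct points in ℝ^d (n ≥ 1). Let x ∈ S and let K be an affine subspace of ℝ^d of dimension d−2 with x ∈ K. Then there exists a perfect hyperplane H with K ⊆ H, i.e. an affine hyperplane H containing K such that each of its two open sides contains fewer than n points of S. -/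
/-!
Rotate a hyperplane about `K`: its normal `c θ` runs through the plane `K.directionᗮ`, and
`c (θ + π) = -c θ` swaps the two open sides. Since `x ∈ K ∩ S` lies on every such hyperplane, the
two sides never contain together more than `|S| - 1` points, so "the positive side holds at least
half of `S`" and "the negative side holds at least half of `S`" are disjoint conditions on `θ`.
Both are open (a point strictly on one side stays there under small rotations) and they are
exchanged by `θ ↦ θ + π`; as `ℝ` is connected they cannot cover it, and at a `θ` outside both the
hyperplane is perfect.
-/

open Finset
open scoped Real RealInnerProductSpace

theorem card_filter_lt_add_card_filter_gt_lt {α β : Type*} [LinearOrder β] (g : α → β)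
    {S : Finset α} {x : α} (hx : x ∈ S) :
    #{y ∈ S | g x < g y} + #{y ∈ S | g y < g x} < #S := by
  classical
  rw [← card_union_of_disjoint (disjoint_filter.2 fun y _ h h' => h.asymm h')]
  refine card_lt_card (ssubset_iff_of_subset ?_ |>.2 ⟨x, hx, ?_⟩)
  · exact union_subset (filter_subset _ _) (filter_subset _ _)
  · simp

theorem isOpen_setOf_le_card_filter {X α : Type*} [TopologicalSpace X] (S : Finset α)
    (p : X → α → Prop) [∀ t, DecidablePred (p t)] (hp : ∀ y ∈ S, IsOpen {t | p t y}) (n : ℕ) :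
    IsOpen {t | n ≤ #(S.filter (p t))} := by
  refine isOpen_iff_mem_nhds.2 fun t₀ ht₀ => ?_
  have hnear : ∀ᶠ t in nhds t₀, ∀ y ∈ S.filter (p t₀), p t y :=
    (Filter.eventually_all_finset _).2 fun y hy =>
      (hp y (mem_filter.1 hy).1).mem_nhds (mem_filter.1 hy).2
  filter_upwards [hnear] with t ht
  exact ht₀.trans (card_le_card fun y hy => mem_filter.2 ⟨(mem_filter.1 hy).1, ht y hy⟩)

theorem exists_notMem_and_notMem_of_disjoint_preimage {X : Type*} [TopologicalSpace X]
    [PreconnectedSpace X] [Nonempty X] {σ : X → X} (hσ : Continuous σ)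
    (hσ' : Function.Surjective σ) {A : Set X} (hA : IsOpen A) (hdisj : Disjoint A (σ ⁻¹' A)) :
    ∃ t, t ∉ A ∧ σ t ∉ A := by
  by_contra! hcover
  obtain ⟨t₀⟩ := ‹Nonempty X›
  have hA_ne : A.Nonempty := by
    by_cases h : t₀ ∈ A
    · exact ⟨t₀, h⟩
    · exact ⟨σ t₀, hcover t₀ h⟩
  obtain ⟨t, -, htA, htσA⟩ := isPreconnected_univ A (σ ⁻¹' A) hA (hA.preimage hσ)
    (fun t _ => or_iff_not_imp_left.2 (hcover t)) (by simpa using hA_ne)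
    (by simpa using hA_ne.preimage hσ')
  exact hdisj.le_bot ⟨htA, htσA⟩

theorem Submodule.exists_continuous_antiperiodic_mem_ne_zero {E : Type*}
    [NormedAddCommGroup E] [NormedSpace ℝ E] (W : Submodule ℝ E)
    (hW : 1 < Module.finrank ℝ W) :
    ∃ c : ℝ → E, Continuous c ∧ Function.Antiperiodic c π ∧ ∀ θ, c θ ∈ W ∧ c θ ≠ 0 := by
  have := Module.finite_of_finrank_pos (zero_lt_one.trans hW)
  obtain ⟨u, hu⟩ := Module.finrank_pos_iff_exists_ne_zero.1 (zero_lt_one.trans hW)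
  obtain ⟨v, huv⟩ := exists_linearIndependent_pair_of_one_lt_finrank hW hu
  refine ⟨fun θ => Real.cos θ • (u : E) + Real.sin θ • (v : E), by fun_prop, fun θ => ?_,
    fun θ => ⟨W.add_mem (W.smul_mem _ u.2) (W.smul_mem _ v.2), fun h => ?_⟩⟩
  · simp only [Real.cos_antiperiodic θ, Real.sin_antiperiodic θ, neg_smul, neg_add]
  · have h' : Real.cos θ • u + Real.sin θ • v = 0 := by ext; simpa using h
    obtain ⟨hcos, hsin⟩ := LinearIndependent.pair_iff.1 huv _ _ h'
    simpa [hcos, hsin] using Real.sin_sq_add_cos_sq θ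

theorem AffineSubspace.inner_eq_of_mem_orthogonal_direction {E : Type*}
    [NormedAddCommGroup E] [InnerProductSpace ℝ E] {K : AffineSubspace ℝ E} {c x y : E}
    (hc : c ∈ K.directionᗮ) (hx : x ∈ K) (hy : y ∈ K) : ⟪y, c⟫ = ⟪x, c⟫ := by
  have h := Submodule.inner_right_of_mem_orthogonal (K.vsub_mem_direction hy hx) hc
  rwa [vsub_eq_sub, inner_sub_left, sub_eq_zero] at h

theorem AffineSubspace.exists_perfect_hyperplane_of_one_lt_finrank_orthogonal {E : Type*}
    [NormedAddCommGroup E] [InnerProductSpace ℝ E] (K : AffineSubspace ℝ E)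
    (hK : 1 < Module.finrank ℝ K.directionᗮ) (S : Finset E) {x : E} (hxS : x ∈ S) (hxK : x ∈ K) :
    ∃ c : E, c ≠ 0 ∧ (K : Set E) ⊆ {y | ⟪y, c⟫ = ⟪x, c⟫} ∧
      2 * #{y ∈ S | ⟪x, c⟫ < ⟪y, c⟫} < #S ∧ 2 * #{y ∈ S | ⟪y, c⟫ < ⟪x, c⟫} < #S := by
  obtain ⟨c, hc, hc_anti, hc_mem⟩ := K.directionᗮ.exists_continuous_antiperiodic_mem_ne_zero hK
  set f : ℝ → ℕ := fun θ => #{y ∈ S | ⟪x, c θ⟫ < ⟪y, c θ⟫}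
  have hf_add_pi (θ : ℝ) : #{y ∈ S | ⟪y, c θ⟫ < ⟪x, c θ⟫} = f (θ + π) := by
    simp only [f, hc_anti θ, inner_neg_right, neg_lt_neg_iff]
  have hopen : IsOpen {θ | #S ≤ 2 * f θ} := by
    have h := isOpen_setOf_le_card_filter S (fun θ y => ⟪x, c θ⟫ < ⟪y, c θ⟫)
      (fun y _ => isOpen_lt (by fun_prop) (by fun_prop)) ((#S + 1) / 2)
    convert h using 3
    dsimp only [f]
    omega
  have hdisj : Disjoint {θ | #S ≤ 2 * f θ} ((· + π) ⁻¹' {θ | #S ≤ 2 * f θ}) := by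
    refine Set.disjoint_left.2 fun θ h₁ h₂ => ?_
    have := card_filter_lt_add_card_filter_gt_lt (⟪·, c θ⟫) hxS
    simp only [Set.mem_preimage, Set.mem_ofPred_eq] at h₁ h₂
    rw [hf_add_pi] at this
    dsimp only [f] at h₁ h₂ this
    omega
  obtain ⟨θ, h₁, h₂⟩ := exists_notMem_and_notMem_of_disjoint_preimage
    (continuous_add_const π) (fun t => ⟨t - π, sub_add_cancel t _⟩) hopen hdisj
  refine ⟨c θ, (hc_mem θ).2, fun y hy => K.inner_eq_of_mem_orthogonal_direction (hc_mem θ).1 hxK hy,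
    ?_, ?_⟩
  · simpa [f] using h₁
  · simpa [hf_add_pi] using h₂

theorem stmt13_general (d : ℕ) (hd : 2 ≤ d) (n : ℕ)
    (S : Finset (EuclideanSpace ℝ (Fin d))) (hcard : S.card = 2 * n)
    (x : EuclideanSpace ℝ (Fin d)) (hx : x ∈ S)
    (K : AffineSubspace ℝ (EuclideanSpace ℝ (Fin d)))
    (hKdim : Module.finrank ℝ K.direction = d - 2) (hxK : x ∈ K) :
    ∃ (c : EuclideanSpace ℝ (Fin d)) (lam : ℝ), c ≠ 0 ∧
      (K : Set (EuclideanSpace ℝ (Fin d))) ⊆ {y | ⟪y, c⟫ = lam} ∧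
      (S.filter fun y => lam < ⟪y, c⟫).card < n ∧
      (S.filter fun y => ⟪y, c⟫ < lam).card < n := by
  have hK : 1 < Module.finrank ℝ K.directionᗮ := by
    have := K.direction.finrank_add_finrank_orthogonal
    rw [finrank_euclideanSpace_fin] at this
    omega
  obtain ⟨c, hc, hKc, hupper, hlower⟩ :=
    K.exists_perfect_hyperplane_of_one_lt_finrank_orthogonal hK S hx hxK
  exact ⟨c, ⟪x, c⟫, hc, hKc, by omega, by omega⟩

/-- let `d ≥ 2`, `S` a set of `2n` points in `ℝ^d`, `x ∈ S`, and `K` an affine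
subspace of dimension `d - 2` with `x ∈ K`.  Then there is a perfect hyperplane containing `K`:
a hyperplane `{y | ⟪y,c⟫ = lam} ⊇ K` each of whose open sides contains fewer than `n`
points of `S`. -/
theorem stmt13 (d : ℕ) (hd : 2 ≤ d) (n : ℕ) (hn : 1 ≤ n)
    (S : Finset (EuclideanSpace ℝ (Fin d))) (hcard : S.card = 2 * n)
    (x : EuclideanSpace ℝ (Fin d)) (hx : x ∈ S)
    (K : AffineSubspace ℝ (EuclideanSpace ℝ (Fin d)))
    (hKdim : Module.finrank ℝ K.direction = d - 2) (hxK : x ∈ K) :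
    ∃ (c : EuclideanSpace ℝ (Fin d)) (lam : ℝ), c ≠ 0 ∧
      (K : Set (EuclideanSpace ℝ (Fin d))) ⊆ {y | ⟪y, c⟫ = lam} ∧
      (S.filter fun y => lam < ⟪y, c⟫).card < n ∧
      (S.filter fun y => ⟪y, c⟫ < lam).card < n :=
  stmt13_general d hd n S hcard x hx K hKdim hxK
end

section
/- Let S be a finite set of points in ℝ^d with |S| ≥ 3, in general position. If either d = 2 and |S| is odd, or d ≥ 3, then Bob wins, i.e. Alice has no winning point: for every a ∈ ℝ^d there exists b ∈ ℝ^d with V_B(a,b) > V_A(a,b). -/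
open scoped RealInnerProductSpace

open scoped Classical in
/-- `S` is in general position: for each `i ∈ {1, …, d-1}`, every affine subspace of
dimension `i` contains at most `i + 1` points of `S`. -/
noncomputable def InGeneralPosition {d : ℕ} (S : Finset (EuclideanSpace ℝ (Fin d))) : Prop :=
  ∀ i : ℕ, 1 ≤ i → i ≤ d - 1 →
    ∀ W : AffineSubspace ℝ (EuclideanSpace ℝ (Fin d)),
      Module.finrank ℝ W.direction = i → (S.filter fun y => y ∈ W).card ≤ i + 1

/-!
If `a` is a winning point, moving Bob from `a` a little in a direction `v` shows that every open
half-space bounded by a hyperplane through `a` contains at most half of the voters. Tilting such a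
hyperplane within a subspace (the direction `w + t • s` for small `t > 0`, with `w` orthogonal to
`U` and nonzero on voters off `a + U`) transfers this to the voters on `a + U` and yields
`|S| mod 2 + 2 · #{x ∈ S ∩ (a + U) | ⟪s, x - a⟫ > 0} ≤ #(S ∩ (a + U))`.
By general position a line through `a` and a voter `p` carries at most two voters, which with
`s = p - a` is impossible when `|S|` is odd; a plane through `a` and two voters `p, q` not
collinear with `a` carries at most three voters, which is impossible for `s` positive on both
`p - a` and `q - a`.
-/

open Filter Topology Finset Module Submodule

lemma Finset.card_filter_or_of_disjoint {α : Type*} [DecidableEq α] (s : Finset α)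
    (p q : α → Prop) [DecidablePred p] [DecidablePred q] (h : ∀ x ∈ s, p x → ¬q x) :
    #{x ∈ s | p x ∨ q x} = #{x ∈ s | p x} + #{x ∈ s | q x} := by
  rw [filter_or, card_union_of_disjoint (disjoint_filter.2 h)]

section HalvingPoint

variable {E : Type*} [NormedAddCommGroup E] [InnerProductSpace ℝ E]

def IsHalvingPoint (S : Finset E) (a : E) : Prop :=
  ∀ v : E, 2 * #{x ∈ S | 0 < ⟪v, x - a⟫} ≤ #S

lemma eventually_dist_add_smul_lt {a v x : E} (h : 0 < ⟪v, x - a⟫) :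
    ∀ᶠ t in 𝓝[>] (0 : ℝ), dist (a + t • v) x < dist a x := by
  have hlim : Tendsto (fun t : ℝ => t * ‖v‖ ^ 2) (𝓝[>] 0) (𝓝 0) := by
    have : Continuous fun t : ℝ => t * ‖v‖ ^ 2 := by fun_prop
    simpa using (this.tendsto 0).mono_left nhdsWithin_le_nhds
  filter_upwards [self_mem_nhdsWithin,
    hlim.eventually (gt_mem_nhds (by linarith : 0 < 2 * ⟪v, x - a⟫))] with t (ht : 0 < t) hsmall
  rw [dist_comm, dist_comm a, dist_eq_norm, dist_eq_norm,
    ← sq_lt_sq₀ (norm_nonneg _) (norm_nonneg _), show x - (a + t • v) = (x - a) - t • v by abel,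
    norm_sub_sq_real, real_inner_smul_right, norm_smul, real_inner_comm, Real.norm_eq_abs,
    abs_of_pos ht]
  nlinarith

lemma eventually_inner_add_smul_pos_iff (w s y : E) :
    ∀ᶠ t in 𝓝[>] (0 : ℝ),
      (0 < ⟪w + t • s, y⟫ ↔ 0 < ⟪w, y⟫ ∨ ⟪w, y⟫ = 0 ∧ 0 < ⟪s, y⟫) := by
  simp only [inner_add_left, real_inner_smul_left]
  have hlim : Tendsto (fun t : ℝ => ⟪w, y⟫ + t * ⟪s, y⟫) (𝓝[>] 0) (𝓝 ⟪w, y⟫) := by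
    have : Continuous fun t : ℝ => ⟪w, y⟫ + t * ⟪s, y⟫ := by fun_prop
    simpa using (this.tendsto 0).mono_left nhdsWithin_le_nhds
  rcases lt_trichotomy ⟪w, y⟫ 0 with h | h | h
  · filter_upwards [hlim.eventually (gt_mem_nhds h)] with t ht
    simp only [ht.not_gt, h.not_gt, h.ne, false_or, false_and]
  · filter_upwards [self_mem_nhdsWithin] with t (ht : 0 < t)
    simp [h, mul_pos_iff_of_pos_left ht]
  · filter_upwards [hlim.eventually (lt_mem_nhds h)] with t ht
    simp [ht, h]

lemma IsHalvingPoint.two_mul_card_lex_pos_le {S : Finset E} {a : E} (h : IsHalvingPoint S a)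
    (w s : E) :
    2 * #{x ∈ S | 0 < ⟪w, x - a⟫ ∨ ⟪w, x - a⟫ = 0 ∧ 0 < ⟪s, x - a⟫} ≤ #S := by
  obtain ⟨t, ht⟩ := ((eventually_all_finset S).2 fun x _ =>
    eventually_inner_add_smul_pos_iff w s (x - a)).exists
  rw [← filter_congr ht]
  exact h _

lemma exists_mem_orthogonal_inner_ne_zero (U : Submodule ℝ E) [U.HasOrthogonalProjection]
    (T : Finset E) : ∃ w ∈ Uᗮ, ∀ y ∈ T, y ∉ U → ⟪w, y⟫ ≠ 0 := by
  classical
  let H : {y : E // y ∉ U} → Submodule ℝ Uᗮ := fun y =>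
    LinearMap.ker ((innerₛₗ ℝ (y : E)).comp Uᗮ.subtype)
  have hH : ∀ y, H y ≠ ⊤ := by
    rintro ⟨y, hy⟩ htop
    rw [← orthogonal_orthogonal U, mem_orthogonal] at hy
    push Not at hy
    obtain ⟨w, hw, hwy⟩ := hy
    have := LinearMap.congr_fun (LinearMap.ker_eq_top.1 htop) ⟨w, hw⟩
    simp only [LinearMap.comp_apply, innerₛₗ_apply_apply, LinearMap.zero_apply] at this
    exact hwy (by rwa [real_inner_comm])
  obtain ⟨w, hw⟩ := Set.ne_univ_iff_exists_notMem _ |>.1 <| Set.ssubset_univ_iff.1 <|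
    iUnion_ssubset_of_forall_ne_top_of_card_lt (T.subtype (· ∉ U)) H hH
      (by simp [ENat.card_eq_top_of_infinite])
  refine ⟨w, w.2, fun y hy hyU hwy => hw ?_⟩
  exact Set.mem_iUnion₂.2 ⟨⟨y, hyU⟩, mem_subtype.2 hy, by simpa [H, real_inner_comm] using hwy⟩

open scoped Classical in
lemma IsHalvingPoint.card_mod_two_add_two_mul_card_le {S : Finset E} {a : E}
    (h : IsHalvingPoint S a) (U : Submodule ℝ E) [U.HasOrthogonalProjection] (s : E) :
    #S % 2 + 2 * #{x ∈ S | x - a ∈ U ∧ 0 < ⟪s, x - a⟫} ≤ #{x ∈ S | x - a ∈ U} := by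
  obtain ⟨w, hwU, hw⟩ := exists_mem_orthogonal_inner_ne_zero U (S.image (· - a))
  have hzero : ∀ x ∈ S, ⟪w, x - a⟫ = 0 ↔ x - a ∈ U := fun x hx =>
    ⟨fun h0 => by_contra fun hxU => hw _ (mem_image_of_mem _ hx) hxU h0,
      fun hxU => inner_left_of_mem_orthogonal hxU hwU⟩
  have hlex (w' : E) (hw' : ∀ x ∈ S, ⟪w', x - a⟫ = 0 ↔ x - a ∈ U) :
      2 * (#{x ∈ S | 0 < ⟪w', x - a⟫} + #{x ∈ S | x - a ∈ U ∧ 0 < ⟪s, x - a⟫}) ≤ #S := by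
    have := h.two_mul_card_lex_pos_le w' s
    rwa [card_filter_or_of_disjoint _ _ _ fun x _ hpos hzs => hpos.ne' hzs.1,
      filter_congr fun x hx => and_congr_left' (hw' x hx)] at this
  have hpos := hlex w hzero
  have hneg := hlex (-w) (by simpa only [inner_neg_left, neg_eq_zero] using hzero)
  have htotal : #S = #{x ∈ S | 0 < ⟪w, x - a⟫} + #{x ∈ S | 0 < ⟪-w, x - a⟫}
      + #{x ∈ S | x - a ∈ U} := by
    simp only [card_eq_sum_ones, sum_filter, ← sum_add_distrib]
    refine sum_congr rfl fun x hx => ?_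
    simp only [inner_neg_left, ← hzero x hx]
    rcases lt_trichotomy ⟪w, x - a⟫ 0 with h | h | h
    · simp [h, h.not_gt, h.ne]
    · simp [h]
    · simp [h, h.le, h.ne']
  omega

end HalvingPoint

lemma exists_inner_pos_of_linearIndependent {E : Type*} [NormedAddCommGroup E]
    [InnerProductSpace ℝ E] {u v : E} (h : LinearIndependent ℝ ![u, v]) :
    ∃ s : E, 0 < ⟪s, u⟫ ∧ 0 < ⟪s, v⟫ := by
  have hu : 0 < ‖u‖ := norm_pos_iff.2 (h.ne_zero 0)
  have hv : 0 < ‖v‖ := norm_pos_iff.2 (h.ne_zero 1)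
  set s := ‖v‖ • u + ‖u‖ • v
  have hs : s ≠ 0 := fun h0 => hv.ne' (LinearIndependent.pair_iff.1 h _ _ h0).1
  set c := ‖u‖ * ‖v‖ + ⟪u, v⟫
  have hsu : ⟪s, u⟫ = ‖u‖ * c := by
    simp only [s, c, inner_add_left, real_inner_smul_left, real_inner_self_eq_norm_sq,
      real_inner_comm u v]
    ring
  have hsv : ⟪s, v⟫ = ‖v‖ * c := by
    simp only [s, c, inner_add_left, real_inner_smul_left, real_inner_self_eq_norm_sq]
    ring
  have hc : 0 < c := by
    have hss : ⟪s, s⟫ = 2 * (‖u‖ * ‖v‖) * c := by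
      conv_lhs => rw [show s = ‖v‖ • u + ‖u‖ • v from rfl]
      rw [inner_add_right, real_inner_smul_right, real_inner_smul_right, hsu, hsv]
      ring
    have := real_inner_self_pos.2 hs
    rw [hss] at this
    exact pos_of_mul_pos_right this (by positivity)
  exact ⟨s, by rw [hsu]; positivity, by rw [hsv]; positivity⟩

section Voting

variable {d : ℕ}

lemma claims_add_claims_le (S : Finset (EuclideanSpace ℝ (Fin d)))
    (a b : EuclideanSpace ℝ (Fin d)) : claims S a b + claims S b a ≤ #S := by
  rw [claims, claims, ← card_union_of_disjoint (disjoint_filter.2 fun x _ h h' => h.not_gt h')]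
  exact card_le_card (union_subset (filter_subset _ _) (filter_subset _ _))

lemma IsWinningPoint.isHalvingPoint {S : Finset (EuclideanSpace ℝ (Fin d))}
    {a : EuclideanSpace ℝ (Fin d)} (h : IsWinningPoint S a) : IsHalvingPoint S a := by
  intro v
  obtain ⟨t, ht⟩ := ((eventually_all_finset {x ∈ S | 0 < ⟪v, x - a⟫}).2 fun x hx =>
    eventually_dist_add_smul_lt (mem_filter.1 hx).2).exists
  have hcloser : #{x ∈ S | 0 < ⟪v, x - a⟫} ≤ claims S (a + t • v) a :=
    card_le_card fun x hx => mem_filter.2 ⟨(mem_filter.1 hx).1, ht x hx⟩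
  have := h (a + t • v)
  have := claims_add_claims_le S a (a + t • v)
  omega

open scoped Classical in
lemma InGeneralPosition.card_filter_sub_mem_le {S : Finset (EuclideanSpace ℝ (Fin d))}
    (hgen : InGeneralPosition S) (a : EuclideanSpace ℝ (Fin d))
    (U : Submodule ℝ (EuclideanSpace ℝ (Fin d))) (h1 : 1 ≤ finrank ℝ U)
    (h2 : finrank ℝ U ≤ d - 1) : #{x ∈ S | x - a ∈ U} ≤ finrank ℝ U + 1 := by
  simpa only [AffineSubspace.mem_mk', vsub_eq_sub] using
    hgen _ h1 h2 (AffineSubspace.mk' a U) (by rw [AffineSubspace.direction_mk'])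

lemma InGeneralPosition.not_isHalvingPoint_of_odd_card {S : Finset (EuclideanSpace ℝ (Fin d))}
    (hgen : InGeneralPosition S) (hd : 2 ≤ d) (hS : 1 < #S) (hodd : Odd #S)
    (a : EuclideanSpace ℝ (Fin d)) : ¬IsHalvingPoint S a := by
  classical
  intro ha
  obtain ⟨p, hp, hpa⟩ := exists_mem_ne hS a
  have hU : finrank ℝ (span ℝ {p - a}) = 1 := finrank_span_singleton (sub_ne_zero.2 hpa)
  have hline := hgen.card_filter_sub_mem_le a _ hU.ge (by omega)
  have hp_pos : 0 < #{x ∈ S | x - a ∈ span ℝ {p - a} ∧ 0 < ⟪p - a, x - a⟫} :=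
    card_pos.2 ⟨p, mem_filter.2 ⟨hp, mem_span_singleton_self _,
      real_inner_self_pos.2 (sub_ne_zero.2 hpa)⟩⟩
  have := ha.card_mod_two_add_two_mul_card_le (span ℝ {p - a}) (p - a)
  rw [Nat.odd_iff.1 hodd] at this
  omega

lemma InGeneralPosition.exists_linearIndependent_sub {S : Finset (EuclideanSpace ℝ (Fin d))}
    (hgen : InGeneralPosition S) (hd : 2 ≤ d) (hS : 3 ≤ #S) (a : EuclideanSpace ℝ (Fin d)) :
    ∃ p ∈ S, ∃ q ∈ S, LinearIndependent ℝ ![p - a, q - a] := by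
  classical
  obtain ⟨p, hp, hpa⟩ := exists_mem_ne (by omega : 1 < #S) a
  have hpa' : p - a ≠ 0 := sub_ne_zero.2 hpa
  have hU : finrank ℝ (span ℝ {p - a}) = 1 := finrank_span_singleton hpa'
  have hline := hgen.card_filter_sub_mem_le a _ hU.ge (by omega)
  obtain ⟨q, hq, hqU⟩ : ∃ q ∈ S, q - a ∉ span ℝ {p - a} := by
    by_contra! hall
    rw [filter_true_of_mem hall] at hline
    omega
  refine ⟨p, hp, q, hq, (LinearIndependent.pair_iff' hpa').2 fun c hc => hqU ?_⟩
  exact hc ▸ smul_mem _ c (mem_span_singleton_self _)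

lemma InGeneralPosition.not_isHalvingPoint_of_three_le {S : Finset (EuclideanSpace ℝ (Fin d))}
    (hgen : InGeneralPosition S) (hd : 3 ≤ d) (hS : 3 ≤ #S) (a : EuclideanSpace ℝ (Fin d)) :
    ¬IsHalvingPoint S a := by
  classical
  intro ha
  obtain ⟨p, hp, q, hq, hpq⟩ := hgen.exists_linearIndependent_sub (by omega) hS a
  obtain ⟨s, hsp, hsq⟩ := exists_inner_pos_of_linearIndependent hpq
  set U := span ℝ (Set.range ![p - a, q - a])
  have hU : finrank ℝ U = 2 := by simpa using finrank_span_eq_card hpq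
  have hplane := hgen.card_filter_sub_mem_le a U (by omega) (by omega)
  have hpq_ne : p ≠ q := by
    rintro rfl
    exact hpq.injective.ne (show (0 : Fin 2) ≠ 1 by decide) rfl
  have hboth : 2 ≤ #{x ∈ S | x - a ∈ U ∧ 0 < ⟪s, x - a⟫} := by
    rw [← card_pair hpq_ne]
    refine card_le_card fun x hx => ?_
    rcases mem_insert.1 hx with rfl | hx
    · exact mem_filter.2 ⟨hp, subset_span ⟨0, rfl⟩, hsp⟩
    · rw [mem_singleton.1 hx]
      exact mem_filter.2 ⟨hq, subset_span ⟨1, rfl⟩, hsq⟩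
  have := ha.card_mod_two_add_two_mul_card_le U s
  omega

end Voting

theorem stmt15_general (d : ℕ) (S : Finset (EuclideanSpace ℝ (Fin d)))
    (hS : 3 ≤ S.card) (hgen : InGeneralPosition S)
    (hcase : (d = 2 ∧ Odd S.card) ∨ 3 ≤ d) :
    ∀ a : EuclideanSpace ℝ (Fin d), ∃ b : EuclideanSpace ℝ (Fin d),
      claims S a b < claims S b a := by
  intro a
  by_contra! hwin
  have ha : IsHalvingPoint S a := IsWinningPoint.isHalvingPoint hwin
  rcases hcase with ⟨rfl, hodd⟩ | hd
  · exact hgen.not_isHalvingPoint_of_odd_card le_rfl (by omega) hodd a ha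
  · exact hgen.not_isHalvingPoint_of_three_le hd hS a ha

/-- if `|S| ≥ 3`, `S` is in general position, and either `d = 2` with `|S|` odd
or `d ≥ 3`, then Bob wins: for every `a` there is `b` with `V_B(a,b) > V_A(a,b)`. -/
theorem stmt15 (d : ℕ) (hd : 1 ≤ d) (S : Finset (EuclideanSpace ℝ (Fin d)))
    (hS : 3 ≤ S.card) (hgen : InGeneralPosition S)
    (hcase : (d = 2 ∧ Odd S.card) ∨ 3 ≤ d) :
    ∀ a : EuclideanSpace ℝ (Fin d), ∃ b : EuclideanSpace ℝ (Fin d),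
      claims S a b < claims S b a :=
  stmt15_general d S hS hgen hcase
end
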